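/- For every integer n ≥ 1, the complete bipartite graph K_{2,n} satisfies pid(K_{2,n}) = 2. -/

import Mathlib

open scoped Classical

/-- `f : V → ℕ` is a perfect Italian dominating function of `G`:
labels are in `{0,1,2}` and every vertex labeled `0` has neighbor labels summing to exactly `2`. -/
def IsPIDFun {V : Type*} [Fintype V] (G : SimpleGraph V) (f : V → ℕ) : Prop :=
  (∀ v, f v ≤ 2) ∧ ∀ v, f v = 0 → (∑ u, if G.Adj v u then f u else 0) = 2

/-- The perfect Italian domination number: minimum weight of a PID-function. -/
noncomputable def pid {V : Type*} [Fintype V] (G : SimpleGraph V) : ℕ :=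
  sInf {w | ∃ f, IsPIDFun G f ∧ w = ∑ v, f v}

/-! A PID-function either has a vertex labeled `0`, whose neighbourhood alone already carries
weight `2`, or labels every vertex at least `1`; either way two vertices force weight `2`.
On `K_{2,n}` labeling the two vertices of the small side by `1` attains this bound. -/

section

variable {V : Type*} [Fintype V] {G : SimpleGraph V}

theorem isPIDFun_one : IsPIDFun G 1 :=
  ⟨fun _ => by simp, fun _ h => absurd h one_ne_zero⟩

theorem pid_le {f : V → ℕ} (hf : IsPIDFun G f) : pid G ≤ ∑ v, f v :=
  Nat.sInf_le ⟨f, hf, rfl⟩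

theorem IsPIDFun.two_le_sum {f : V → ℕ} (hf : IsPIDFun G f) (hV : 2 ≤ Fintype.card V) :
    2 ≤ ∑ v, f v := by
  by_cases hzero : ∃ v, f v = 0
  · obtain ⟨v, hv⟩ := hzero
    calc 2 = ∑ u, if G.Adj v u then f u else 0 := (hf.2 v hv).symm
      _ ≤ ∑ u, f u := Finset.sum_le_sum fun u _ => by split_ifs <;> simp
  · simp only [not_exists] at hzero
    calc 2 ≤ ∑ _v : V, 1 := by simpa using hV
      _ ≤ ∑ v, f v := Finset.sum_le_sum fun v _ => Nat.one_le_iff_ne_zero.mpr (hzero v)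

-- `isPIDFun_one` keeps the set of weights nonempty, so `sInf` is not the junk value `0`.
theorem two_le_pid (hV : 2 ≤ Fintype.card V) : 2 ≤ pid G :=
  le_csInf ⟨_, 1, isPIDFun_one, rfl⟩ fun _ ⟨_, hf, hw⟩ => hw ▸ hf.two_le_sum hV

end

theorem isPIDFun_completeBipartiteGraph_elim_one_zero {α β : Type*} [Fintype α] [Fintype β]
    (hα : Fintype.card α = 2) : IsPIDFun (completeBipartiteGraph α β) (Sum.elim 1 0) := by
  refine ⟨by rintro (a | b) <;> simp, ?_⟩
  rintro (a | b) h
  · simp at h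
  · simp [Fintype.sum_sum_type, completeBipartiteGraph, hα]

theorem pid_completeBipartite_two_general (n : ℕ) :
    pid (completeBipartiteGraph (Fin 2) (Fin n)) = 2 := by
  have hf := isPIDFun_completeBipartiteGraph_elim_one_zero (β := Fin n) (Fintype.card_fin 2)
  refine le_antisymm ?_ (two_le_pid (by simp))
  simpa [Fintype.sum_sum_type] using pid_le hf

/-- For every `n ≥ 1`, the complete bipartite graph `K_{2,n}` has
perfect Italian domination number `2`. -/
theorem pid_completeBipartite_two (n : ℕ) (hn : 1 ≤ n) :
    pid (completeBipartiteGraph (Fin 2) (Fin n)) = 2 :=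
  pid_completeBipartite_two_general n
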